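/- arXiv:1808.03268 — 8 statements merged into one kernel-verified Lean document; each statement's English description precedes it below -/
import Mathlib

section
/- Let I and K be ideals on a set S with K ⊆ I, and let P be a PM space with continuous triangle function. If f : S → P is strong-I^K-convergent to p, then f is strong-I-convergent to p, i.e. {s ∈ S : f(s) ∉ N_p(t)} ∈ I for every strong t-neighborhood N_p(t) of p. -/
open Set
open scoped Classical

/-- A probabilistic metric space, encoded via the family of distance
distribution functions `F a b : ℝ → ℝ`, with the axioms needed for the
strong topology: `F a a = ε₀`, separation of distinct points, symmetry,
and the consequence of continuity of the triangle function `τ`. -/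
structure PMSpace (P : Type*) where
  F : P → P → ℝ → ℝ
  self_one : ∀ a : P, ∀ t : ℝ, 0 < t → F a a t = 1
  ne_sep : ∀ a b : P, a ≠ b → ∃ t : ℝ, 0 < t ∧ F a b t ≤ 1 - t
  symm : ∀ a b : P, ∀ t : ℝ, F a b t = F b a t
  triangle : ∀ t : ℝ, 0 < t → ∃ η : ℝ, 0 < η ∧
    ∀ a b c : P, 1 - η < F a b η → 1 - η < F b c η → 1 - t < F a c t

/-- The strong `t`-neighborhood `N_p(t) = {q : F_{pq}(t) > 1 - t}`. -/
def PMSpace.Nbhd {P : Type*} (M : PMSpace P) (p : P) (t : ℝ) : Set P :=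
  {q | 1 - t < M.F p q t}

/-- An ideal of subsets of `S`. -/
def IsIdeal {S : Type*} (I : Set (Set S)) : Prop :=
  ∅ ∈ I ∧ (∀ A ∈ I, ∀ B, B ⊆ A → B ∈ I) ∧ (∀ A ∈ I, ∀ B ∈ I, A ∪ B ∈ I)

/-- An admissible ideal: contains all singletons and is nontrivial. -/
def IsAdmissibleIdeal {S : Type*} (I : Set (Set S)) : Prop :=
  IsIdeal I ∧ (∀ s : S, {s} ∈ I) ∧ Set.univ ∉ I

/-- The ideal `I ∨ K = {A ∪ B : A ∈ I, B ∈ K}`. -/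
def IdealJoin {S : Type*} (I K : Set (Set S)) : Set (Set S) :=
  {C | ∃ A ∈ I, ∃ B ∈ K, C = A ∪ B}

/-- The trace ideal `K|_A = {C ∩ A : C ∈ K}`. -/
def TraceIdeal {S : Type*} (K : Set (Set S)) (A : Set S) : Set (Set S) :=
  {B | ∃ C ∈ K, B = C ∩ A}

/-- `f` is strong-`K`-convergent to `p`. -/
def StrongConv {S P : Type*} (M : PMSpace P) (K : Set (Set S)) (f : S → P) (p : P) : Prop :=
  ∀ t : ℝ, 0 < t → {s | f s ∉ M.Nbhd p t} ∈ K

/-- `f` is strong-`I^K`-convergent to `p`: there is `A` with `Aᶜ ∈ I`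
(i.e. `A ∈ F(I)`) such that the modification of `f`, equal to `p` off `A`,
is strong-`K`-convergent to `p`. -/
def StrongIKConv {S P : Type*} (M : PMSpace P) (I K : Set (Set S)) (f : S → P) (p : P) : Prop :=
  ∃ A : Set S, Aᶜ ∈ I ∧ StrongConv M K (fun s => if s ∈ A then f s else p) p

/-- `f` is strong-`I`-Cauchy. -/
def StrongCauchy {S P : Type*} (M : PMSpace P) (I : Set (Set S)) (f : S → P) : Prop :=
  ∀ t : ℝ, 0 < t → ∃ m : S, {s | f s ∉ M.Nbhd (f m) t} ∈ I

/-- `f` is strong-`I^K`-Cauchy: there is `A ∈ F(I)` such that `f|_A` is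
strong-`K|_A`-Cauchy. -/
def StrongIKCauchy {S P : Type*} (M : PMSpace P) (I K : Set (Set S)) (f : S → P) : Prop :=
  ∃ A : Set S, Aᶜ ∈ I ∧ ∀ t : ℝ, 0 < t → ∃ m ∈ A,
    {s ∈ A | f s ∉ M.Nbhd (f m) t} ∈ TraceIdeal K A

/-- The strong topology on a PM space, generated by strong neighborhoods. -/
def strongTopology {P : Type*} (M : PMSpace P) : TopologicalSpace P :=
  TopologicalSpace.generateFrom {U | ∃ p : P, ∃ t : ℝ, 0 < t ∧ U = M.Nbhd p t}

theorem IsIdeal.mem_of_subset_union {S : Type*} {I : Set (Set S)} (hI : IsIdeal I)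
    {A B C : Set S} (hA : A ∈ I) (hB : B ∈ I) (hC : C ⊆ A ∪ B) : C ∈ I :=
  hI.2.1 _ (hI.2.2 _ hA _ hB) _ hC

theorem StrongConv.mono {S P : Type*} {M : PMSpace P} {I K : Set (Set S)} {f : S → P} {p : P}
    (hKI : K ⊆ I) (h : StrongConv M K f p) : StrongConv M I f p :=
  fun t ht => hKI (h t ht)

theorem setOf_notMem_subset_ite_union_compl {S P : Type*} (f : S → P) (p : P) (A : Set S)
    (N : Set P) : {s | f s ∉ N} ⊆ {s | (if s ∈ A then f s else p) ∉ N} ∪ Aᶜ := by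
  intro s hs
  by_cases hsA : s ∈ A
  · left
    simpa [hsA] using hs
  · exact Or.inr hsA

theorem StrongConv.of_ite {S P : Type*} {M : PMSpace P} {I : Set (Set S)} (hI : IsIdeal I)
    {f : S → P} {p : P} {A : Set S} (hA : Aᶜ ∈ I)
    (h : StrongConv M I (fun s => if s ∈ A then f s else p) p) : StrongConv M I f p :=
  fun t ht => hI.mem_of_subset_union (h t ht) hA (setOf_notMem_subset_ite_union_compl f p A _)

theorem stmt3_general {S P : Type*} (M : PMSpace P) (I K : Set (Set S))
    (hI : IsIdeal I) (hKI : K ⊆ I)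
    (f : S → P) (p : P) (h : StrongIKConv M I K f p) :
    StrongConv M I f p := by
  obtain ⟨A, hA, hconv⟩ := h
  exact (hconv.mono hKI).of_ite hI hA

theorem stmt3 {S P : Type*} (M : PMSpace P) (I K : Set (Set S))
    (hI : IsIdeal I) (hK : IsIdeal K) (hKI : K ⊆ I)
    (f : S → P) (p : P) (h : StrongIKConv M I K f p) :
    StrongConv M I f p :=
  stmt3_general M I K hI hKI f p h
end

section
/- Let I ⊆ K be ideals on a set S and P a PM space. If f : S → P is strong-I-convergent to p, then f is strong-I^K-convergent to p. -/
open Set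
open scoped Classical

theorem stmt4 {S P : Type*} (M : PMSpace P) (I K : Set (Set S))
    (hI : IsIdeal I) (hK : IsIdeal K) (hIK : I ⊆ K)
    (f : S → P) (p : P) (h : StrongConv M I f p) :
    StrongIKConv M I K f p := by
  refine ⟨Set.univ, by simpa using hI.1, fun t ht => ?_⟩
  simpa using hIK (h t ht)
end

section
/- Let I, K be ideals on a set S and let I ∨ K = {A ∪ B : A ∈ I, B ∈ K}. For any function f : S → P into a PM space and any p ∈ P, f is strong-I^K-convergent to p if and only if f is strong-(I ∨ K)^K-convergent to p. -/
open Set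
open scoped Classical

theorem PMSpace.mem_nbhd_self {P : Type*} (M : PMSpace P) (p : P) {t : ℝ} (ht : 0 < t) :
    p ∈ M.Nbhd p t := by
  simp only [PMSpace.Nbhd, mem_ofPred_eq, M.self_one p t ht]
  linarith

theorem subset_idealJoin_left {S : Type*} {I K : Set (Set S)} (hK : ∅ ∈ K) :
    I ⊆ IdealJoin I K :=
  fun A hA => ⟨A, hA, ∅, hK, (union_empty A).symm⟩

theorem StrongIKConv.mono_left {S P : Type*} {M : PMSpace P} {I I' K : Set (Set S)}
    {f : S → P} {p : P} (hII' : I ⊆ I') (h : StrongIKConv M I K f p) :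
    StrongIKConv M I' K f p :=
  let ⟨A, hA, hconv⟩ := h
  ⟨A, hII' hA, hconv⟩

/-- Off `A` the modified function sits at `p`, so shrinking `A` up to a set `C ∈ K` only adds
points of `C` to the sets that must lie in `K`. -/
theorem StrongConv.ite_of_subset_union {S P : Type*} {M : PMSpace P} {K : Set (Set S)}
    (hK : IsIdeal K) {f : S → P} {p : P} {A A' C : Set S} (hC : C ∈ K) (hA' : A' ⊆ A ∪ C)
    (h : StrongConv M K (fun s => if s ∈ A then f s else p) p) :
    StrongConv M K (fun s => if s ∈ A' then f s else p) p := by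
  intro t ht
  refine hK.2.1 _ (hK.2.2 _ (h t ht) _ hC) _ fun s hs => ?_
  simp only [mem_union, mem_ofPred_eq] at hs ⊢
  by_cases hsA' : s ∈ A'
  · rw [if_pos hsA'] at hs
    rcases hA' hsA' with hsA | hsC
    · exact Or.inl (by rwa [if_pos hsA])
    · exact Or.inr hsC
  · rw [if_neg hsA'] at hs
    exact absurd (M.mem_nbhd_self p ht) hs

theorem StrongIKConv.of_idealJoin {S P : Type*} {M : PMSpace P} {I K : Set (Set S)}
    (hK : IsIdeal K) {f : S → P} {p : P} (h : StrongIKConv M (IdealJoin I K) K f p) :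
    StrongIKConv M I K f p := by
  obtain ⟨A, ⟨B, hB, C, hC, hBC⟩, hconv⟩ := h
  have hBc : Bᶜ ⊆ A ∪ C := fun s hs => by
    by_contra hAC
    rw [mem_union, not_or, ← mem_compl_iff, hBC] at hAC
    exact hAC.2 (hAC.1.resolve_left hs)
  exact ⟨Bᶜ, by rwa [compl_compl], hconv.ite_of_subset_union hK hC hBc⟩

theorem stmt6_general {S P : Type*} (M : PMSpace P) (I K : Set (Set S))
    (hK : IsIdeal K) (f : S → P) (p : P) :
    StrongIKConv M I K f p ↔ StrongIKConv M (IdealJoin I K) K f p :=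
  ⟨StrongIKConv.mono_left (subset_idealJoin_left hK.1), StrongIKConv.of_idealJoin hK⟩

theorem stmt6 {S P : Type*} (M : PMSpace P) (I K : Set (Set S))
    (hI : IsIdeal I) (hK : IsIdeal K) (f : S → P) (p : P) :
    StrongIKConv M I K f p ↔ StrongIKConv M (IdealJoin I K) K f p :=
  stmt6_general M I K hK f p
end

section
/- Let S be a set, I and K ideals on S such that I ∨ K = {A ∪ B : A ∈ I, B ∈ K} is a nontrivial ideal (S ∉ I ∨ K), and let P be a PM space with continuous triangle function (so the strong topology is Hausdorff). Then the strong-I^K-limit of a function f : S → P is unique: if f is strong-I^K-convergent to p and to q, then p = q. -/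
open Set
open scoped Classical

/-!
Off the `I`-small set where `f` was modified, the modification is `f` itself, so a strong-`I^K`
limit is a strong limit along the ideal `I ∨ K`. Along a nontrivial ideal, two limits `p`, `q`
have a common point in `N_p(η) ∩ N_q(η)` for every `η`, and the triangle axiom then contradicts
the separation of `p ≠ q`.
-/

theorem PMSpace.eq_of_forall_nbhd_inter_nonempty {P : Type*} (M : PMSpace P) {p q : P}
    (h : ∀ η : ℝ, 0 < η → (M.Nbhd p η ∩ M.Nbhd q η).Nonempty) : p = q := by
  by_contra hne
  obtain ⟨t, ht, hFt⟩ := M.ne_sep p q hne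
  obtain ⟨η, hη, htri⟩ := M.triangle t ht
  obtain ⟨x, hpx, hqx⟩ := h η hη
  have hxq : 1 - η < M.F x q η := by rw [M.symm]; exact hqx
  exact (htri p x q hpx hxq).not_ge hFt

theorem IsIdeal.idealJoin {S : Type*} {I K : Set (Set S)} (hI : IsIdeal I) (hK : IsIdeal K) :
    IsIdeal (IdealJoin I K) := by
  obtain ⟨hI₀, hI_sub, hI_union⟩ := hI
  obtain ⟨hK₀, hK_sub, hK_union⟩ := hK
  refine ⟨⟨∅, hI₀, ∅, hK₀, (empty_union ∅).symm⟩, ?_, ?_⟩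
  · rintro _ ⟨A, hA, B, hB, rfl⟩ C hC
    refine ⟨C ∩ A, hI_sub A hA _ inter_subset_right, C ∩ B, hK_sub B hB _ inter_subset_right, ?_⟩
    rw [← inter_union_distrib_left, inter_eq_left.mpr hC]
  · rintro _ ⟨A, hA, B, hB, rfl⟩ _ ⟨A', hA', B', hB', rfl⟩
    exact ⟨A ∪ A', hI_union A hA A' hA', B ∪ B', hK_union B hB B' hB',
      union_union_union_comm A B A' B'⟩

theorem StrongIKConv.strongConv_idealJoin {S P : Type*} {M : PMSpace P} {I K : Set (Set S)}
    (hI : IsIdeal I) (hK : IsIdeal K) {f : S → P} {p : P} (h : StrongIKConv M I K f p) :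
    StrongConv M (IdealJoin I K) f p := by
  obtain ⟨A, hAc, hA⟩ := h
  intro t ht
  have hsub : {s | f s ∉ M.Nbhd p t} ⊆ Aᶜ ∪ {s | (if s ∈ A then f s else p) ∉ M.Nbhd p t} := by
    intro s hs
    by_cases hsA : s ∈ A
    · exact Or.inr (by simpa [hsA] using hs)
    · exact Or.inl hsA
  exact (hI.idealJoin hK).2.1 _ ⟨Aᶜ, hAc, _, hA t ht, rfl⟩ _ hsub

theorem StrongConv.unique {S P : Type*} {M : PMSpace P} {J : Set (Set S)} (hJ : IsIdeal J)
    (hnt : univ ∉ J) {f : S → P} {p q : P} (hp : StrongConv M J f p) (hq : StrongConv M J f q) :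
    p = q := by
  refine M.eq_of_forall_nbhd_inter_nonempty fun η hη => ?_
  have hbad : {s | f s ∉ M.Nbhd p η} ∪ {s | f s ∉ M.Nbhd q η} ∈ J :=
    hJ.2.2 _ (hp η hη) _ (hq η hη)
  obtain ⟨s, hs⟩ := (ne_univ_iff_exists_notMem _).mp fun h => hnt (h ▸ hbad)
  simp only [mem_union, mem_ofPred_eq, not_or, not_not] at hs
  exact ⟨f s, hs⟩

theorem stmt7 {S P : Type*} (M : PMSpace P) (I K : Set (Set S))
    (hI : IsIdeal I) (hK : IsIdeal K) (hnt : Set.univ ∉ IdealJoin I K)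
    (f : S → P) (p q : P)
    (hp : StrongIKConv M I K f p) (hq : StrongIKConv M I K f q) :
    p = q :=
  StrongConv.unique (hI.idealJoin hK) hnt (hp.strongConv_idealJoin hI hK)
    (hq.strongConv_idealJoin hI hK)
end

section
/- Let I, K be admissible ideals on a set S and let P be a PM space whose strong topology has no limit points (every singleton is open). If f : S → P is strong-I-convergent to p, then f is strong-I^K-convergent to p. -/
open Set
open scoped Classical

theorem strongConv_const {S P : Type*} (M : PMSpace P) {K : Set (Set S)} (hK : ∅ ∈ K) (p : P) :
    StrongConv M K (fun _ => p) p := by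
  intro t ht
  simpa only [M.mem_nbhd_self p ht, not_true_eq_false, ofPred_false] using hK

theorem StrongConv.setOf_ne_mem {S P : Type*} {M : PMSpace P} {I : Set (Set S)} {f : S → P}
    {p : P} (h : StrongConv M I f p) {t : ℝ} (ht : 0 < t) (hN : M.Nbhd p t = {p}) :
    {s | f s ≠ p} ∈ I := by
  simpa only [hN, mem_singleton_iff] using h t ht

theorem strongIKConv_of_setOf_ne_mem {S P : Type*} (M : PMSpace P) {I K : Set (Set S)}
    (hK : ∅ ∈ K) {f : S → P} {p : P} (hf : {s | f s ≠ p} ∈ I) :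
    StrongIKConv M I K f p := by
  refine ⟨{s | f s = p}, hf, ?_⟩
  have hconst : (fun s => if s ∈ {s | f s = p} then f s else p) = fun _ => p := by
    funext s
    split_ifs with hs
    exacts [hs, rfl]
  rw [hconst]
  exact strongConv_const M hK p

theorem stmt10_general {S P : Type*} (M : PMSpace P) (I K : Set (Set S))
    (hK : IsAdmissibleIdeal K)
    (hdisc : ∀ q : P, ∃ t : ℝ, 0 < t ∧ M.Nbhd q t = {q})
    (f : S → P) (p : P) (h : StrongConv M I f p) :
    StrongIKConv M I K f p := by
  obtain ⟨t, ht, hN⟩ := hdisc p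
  exact strongIKConv_of_setOf_ne_mem M hK.1.1 (h.setOf_ne_mem ht hN)

theorem stmt10 {S P : Type*} (M : PMSpace P) (I K : Set (Set S))
    (hI : IsAdmissibleIdeal I) (hK : IsAdmissibleIdeal K)
    (hdisc : ∀ q : P, ∃ t : ℝ, 0 < t ∧ M.Nbhd q t = {q})
    (f : S → P) (p : P) (h : StrongConv M I f p) :
    StrongIKConv M I K f p :=
  stmt10_general M I K hK hdisc f p h
end

section
/- Let I be an ideal on a set S and P a PM space. A function f : S → P is strong-I-Cauchy (for every t > 0 there exists m ∈ S with {s ∈ S : f(s) ∉ N_{f(m)}(t)} ∈ I) if and only if for every t > 0 there exists a set A ∈ I such that s, m ∉ A implies f(s) ∈ N_{f(m)}(t). -/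
open Set
open scoped Classical

/-!
If `m` is a Cauchy center at scale `η`, then two points that are both `η`-close to `f m` are
`t`-close to each other, by the triangle condition; so the exceptional set at `f m` works for all
pairs. Conversely, a set `A ∈ I` is not all of `S`, and any `m ∉ A` is a Cauchy center.
-/

namespace PMSpace

variable {P : Type*} (M : PMSpace P)

theorem mem_nbhd_comm {p q : P} {t : ℝ} : q ∈ M.Nbhd p t ↔ p ∈ M.Nbhd q t := by
  simp only [Nbhd, mem_ofPred_eq, M.symm p q]

theorem exists_nbhd_trans {t : ℝ} (ht : 0 < t) :
    ∃ η > 0, ∀ a b c : P, b ∈ M.Nbhd a η → c ∈ M.Nbhd b η → c ∈ M.Nbhd a t :=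
  M.triangle t ht

end PMSpace

section StrongCauchy

variable {S P : Type*} {M : PMSpace P} {I : Set (Set S)} {f : S → P}

theorem StrongCauchy.exists_pairwise_nbhd (hf : StrongCauchy M I f) {t : ℝ} (ht : 0 < t) :
    ∃ A ∈ I, ∀ s m : S, s ∉ A → m ∉ A → f s ∈ M.Nbhd (f m) t := by
  obtain ⟨η, hη, htrans⟩ := M.exists_nbhd_trans ht
  obtain ⟨c, hc⟩ := hf η hη
  refine ⟨_, hc, fun s m hs hm => ?_⟩
  rw [mem_ofPred_eq, not_not] at hs hm
  exact htrans _ _ _ (M.mem_nbhd_comm.1 hm) hs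

theorem strongCauchy_of_forall_exists_pairwise_nbhd (hI : IsIdeal I) (hnt : univ ∉ I)
    (h : ∀ t : ℝ, 0 < t → ∃ A ∈ I, ∀ s m : S, s ∉ A → m ∉ A → f s ∈ M.Nbhd (f m) t) :
    StrongCauchy M I f := by
  intro t ht
  obtain ⟨A, hA, hpair⟩ := h t ht
  obtain ⟨m, hm⟩ := (ne_univ_iff_exists_notMem A).1 (ne_of_mem_of_not_mem hA hnt)
  exact ⟨m, hI.2.1 A hA _ fun s hs => by_contra fun hsA => hs (hpair s m hsA hm)⟩

end StrongCauchy

theorem stmt12 {S P : Type*} (M : PMSpace P) (I : Set (Set S))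
    (hI : IsIdeal I) (hnt : Set.univ ∉ I) (f : S → P) :
    StrongCauchy M I f ↔
      ∀ t : ℝ, 0 < t → ∃ A ∈ I, ∀ s m : S, s ∉ A → m ∉ A →
        f s ∈ M.Nbhd (f m) t :=
  ⟨fun hf _ ht => hf.exists_pairwise_nbhd ht, strongCauchy_of_forall_exists_pairwise_nbhd hI hnt⟩
end

section
/- Let I be an ideal on a set S and P a PM space. A function f : S → P is strong-I-Cauchy if and only if it is strong-I^I-Cauchy. -/
open Set
open scoped Classical

section StrongIKCauchy

variable {S P : Type*} {M : PMSpace P} {I K : Set (Set S)} {f : S → P}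

theorem IsIdeal.mem_of_subset (hI : IsIdeal I) {A B : Set S} (hA : A ∈ I) (hBA : B ⊆ A) :
    B ∈ I :=
  hI.2.1 A hA B hBA

theorem IsIdeal.union_mem (hI : IsIdeal I) {A B : Set S} (hA : A ∈ I) (hB : B ∈ I) :
    A ∪ B ∈ I :=
  hI.2.2 A hA B hB

theorem StrongCauchy.strongIKCauchy (hI : ∅ ∈ I) (h : StrongCauchy M K f) :
    StrongIKCauchy M I K f := by
  refine ⟨univ, by rwa [compl_univ], fun t ht => ?_⟩
  obtain ⟨m, hm⟩ := h t ht
  exact ⟨m, mem_univ m, _, hm, by simp⟩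

theorem StrongIKCauchy.strongCauchy (hI : IsIdeal I) (hKI : K ⊆ I)
    (h : StrongIKCauchy M I K f) : StrongCauchy M I f := by
  obtain ⟨A, hA, hAK⟩ := h
  intro t ht
  obtain ⟨m, -, C, hC, hCA⟩ := hAK t ht
  refine ⟨m, hI.mem_of_subset (hI.union_mem hA (hKI hC)) fun s hs => ?_⟩
  by_cases hsA : s ∈ A
  · have hs' : s ∈ {s ∈ A | f s ∉ M.Nbhd (f m) t} := ⟨hsA, hs⟩
    rw [hCA] at hs'
    exact Or.inr hs'.1
  · exact Or.inl hsA

end StrongIKCauchy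

theorem stmt15 {S P : Type*} (M : PMSpace P) (I : Set (Set S))
    (hI : IsIdeal I) (f : S → P) :
    StrongCauchy M I f ↔ StrongIKCauchy M I I f :=
  ⟨fun h => h.strongIKCauchy hI.1, fun h => h.strongCauchy hI subset_rfl⟩
end

section
/- Let K be an admissible ideal on an infinite set S with K ⊆ I, and let P be a PM space. Then every strong-I-limit point of a function f : S → P is a strong-I^K-limit point of f, i.e. I(Λ_s(f)) ⊆ I^K(Λ_s(f)). -/
open Set
open scoped Classical

theorem IsIdeal.mem_of_finite {S : Type*} {K : Set (Set S)} (hK : IsIdeal K)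
    (hsingleton : ∀ s : S, {s} ∈ K) {B : Set S} (hB : B.Finite) : B ∈ K := by
  induction B, hB using Set.Finite.induction_on with
  | empty => exact hK.1
  | @insert a B _ _ ih => rw [Set.insert_eq]; exact hK.2.2 _ (hsingleton a) _ ih

theorem IsAdmissibleIdeal.strongConv_of_finite {S P : Type*} {M : PMSpace P}
    {K : Set (Set S)} (hK : IsAdmissibleIdeal K) {g : S → P} {q : P}
    (hg : ∀ t : ℝ, 0 < t → {s | g s ∉ M.Nbhd q t}.Finite) : StrongConv M K g q :=
  fun t ht => hK.1.mem_of_finite hK.2.1 (hg t ht)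

theorem stmt18_general {S P : Type*} (M : PMSpace P) (I K : Set (Set S))
    (hK : IsAdmissibleIdeal K) (hKI : K ⊆ I)
    (f : S → P) (q : P)
    (h : ∃ A : Set S, A ∉ I ∧ ∀ t : ℝ, 0 < t →
      {s | (if s ∈ A then f s else q) ∉ M.Nbhd q t}.Finite) :
    ∃ A : Set S, A ∉ I ∧ A ∉ K ∧
      StrongConv M K (fun s => if s ∈ A then f s else q) q := by
  obtain ⟨A, hAI, hfin⟩ := h
  exact ⟨A, hAI, fun hAK => hAI (hKI hAK), hK.strongConv_of_finite hfin⟩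

theorem stmt18 {S P : Type*} [Infinite S] (M : PMSpace P) (I K : Set (Set S))
    (hI : IsIdeal I) (hK : IsAdmissibleIdeal K) (hKI : K ⊆ I)
    (f : S → P) (q : P)
    (h : ∃ A : Set S, A ∉ I ∧ ∀ t : ℝ, 0 < t →
      {s | (if s ∈ A then f s else q) ∉ M.Nbhd q t}.Finite) :
    ∃ A : Set S, A ∉ I ∧ A ∉ K ∧
      StrongConv M K (fun s => if s ∈ A then f s else q) q :=
  stmt18_general M I K hK hKI f q h
end
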